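/- arXiv:1104.5223 — 3 statements merged into one kernel-verified Lean document; each statement's English description precedes it below -/
import Mathlib

section
/- Let [a],[c] be S_k-orbits in (ZMod N)^k and let [b] be the orbit of the element (1^m, 0^{k-m}) (m coordinates equal to 1 and k−m equal to 0), with m ≤ k. If the set T([a],[b],[c]) = {(x,y,z) ∈ [a]×[b]×[c] : x+y=z} is nonempty, then S_k acts transitively on the subset of T([a],[b],[c]) consisting of triples whose first coordinate is a fixed representative â ∈ [a]; equivalently, the number M of S_k-orbits of T([a],[b],[c]) equals 1. -/
namespace Orbits

/-- Coordinate-permutation action: `(σ • x) i = x (σ⁻¹ i)`. -/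
def pact {N k : ℕ} (σ : Equiv.Perm (Fin k)) (x : Fin k → ZMod N) : Fin k → ZMod N :=
  fun i => x (σ⁻¹ i)

/-- `x` and `y` lie in the same `S_k`-orbit. -/
def SameOrbit {N k : ℕ} (x y : Fin k → ZMod N) : Prop :=
  ∃ σ : Equiv.Perm (Fin k), pact σ x = y

/-- The `S_k`-orbit of `x`. -/
def orbit {N k : ℕ} (x : Fin k → ZMod N) : Set (Fin k → ZMod N) :=
  {y | SameOrbit x y}

abbrev Triple (N k : ℕ) := (Fin k → ZMod N) × (Fin k → ZMod N) × (Fin k → ZMod N)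

/-- `T(A,B,C) = {(x,y,z) ∈ A×B×C | x + y = z}`. -/
def T {N k : ℕ} (A B C : Set (Fin k → ZMod N)) : Set (Triple N k) :=
  {p | p.1 ∈ A ∧ p.2.1 ∈ B ∧ p.2.2 ∈ C ∧ p.1 + p.2.1 = p.2.2}

/-- Diagonal action on triples. -/
def tact {N k : ℕ} (σ : Equiv.Perm (Fin k)) (p : Triple N k) : Triple N k :=
  (pact σ p.1, pact σ p.2.1, pact σ p.2.2)

/-- The number of `S_k`-orbits of a subset of triples (under the diagonal action). -/
noncomputable def numOrbitsOn {N k : ℕ} (S : Set (Triple N k)) : ℕ :=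
  Nat.card (Quot (fun p q : S => ∃ σ : Equiv.Perm (Fin k), tact σ (p : Triple N k) = (q : Triple N k)))

/-- Weakly decreasing with respect to the `ZMod.val` ordering (standard form). -/
def StdForm {N k : ℕ} (x : Fin k → ZMod N) : Prop :=
  ∀ i i' : Fin k, i ≤ i' → (x i').val ≤ (x i).val

/-- The vector `(1^m, 0^{k-m})`. -/
def oneZero (N k m : ℕ) : Fin k → ZMod N :=
  fun i => if (i : ℕ) < m then 1 else 0

/-- The structure constant `M_{[a],[b]}^{[c]}`. -/
noncomputable def M {N k : ℕ} (a b c : Fin k → ZMod N) : ℕ :=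
  numOrbitsOn (T (orbit a) (orbit b) (orbit c))

end Orbits

open Orbits

/-!
Two vectors lie in the same `S_k`-orbit iff they take every value equally often. For a triple
`(x, y, x + y)` with `y` a `0/1`-vector, put `J u = #{i | x i = u ∧ y i = 1}`. Together with
the value counts of `x`, the function `J` fixes the orbit of the pair `(x, y)`, hence of the
triple. Counting the coordinates where `x + y = u` gives
`J u - J (u - 1) = #{x = u} - #{x + y = u}`, which depends only on `[a]` and `[c]`. So for two
triples the difference of their `J`s is invariant under `u ↦ u + 1`, hence constant on `ZMod N`;
it sums to `#{y = 1} - #{y' = 1} = 0`, so it vanishes.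
-/

open Finset

section CardFilter

variable {ι R : Type*} [Fintype ι] [DecidableEq R]

theorem exists_perm_comp_eq_iff_card_filter_eq {f g : ι → R} :
    (∃ σ : Equiv.Perm ι, f ∘ σ = g) ↔ ∀ v, #{i | f i = v} = #{i | g i = v} := by
  constructor
  · rintro ⟨σ, rfl⟩ v
    exact (card_equiv σ (by simp)).symm
  · intro h
    have e : ∀ v, {i // g i = v} ≃ {i // f i = v} := fun v =>
      Fintype.equivOfCardEq (by simpa only [Fintype.card_subtype] using (h v).symm)
    exact ⟨Equiv.ofFiberEquiv e, funext (Equiv.ofFiberEquiv_map e)⟩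

theorem card_filter_eq_card_filter_and_add (p : ι → Prop) [DecidablePred p] (q : ι → Prop)
    [DecidablePred q] : #{i | p i} = #{i | p i ∧ q i} + #{i | p i ∧ ¬q i} := by
  simpa only [filter_filter] using (card_filter_add_card_filter_not (s := {i | p i}) q).symm

theorem card_filter_add_eq [AddGroupWithOne R] (x : ι → R) {y : ι → R}
    (hy : ∀ i, y i = 0 ∨ y i = 1) (u : R) :
    #{i | x i + y i = u} + #{i | x i = u ∧ y i = 1} =
      #{i | x i = u} + #{i | x i = u - 1 ∧ y i = 1} := by
  rw [card_filter_eq_card_filter_and_add (fun i => x i + y i = u) (fun i => y i = 1),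
    card_filter_eq_card_filter_and_add (fun i => x i = u) (fun i => y i = 1)]
  have hone : #{i | x i + y i = u ∧ y i = 1} = #{i | x i = u - 1 ∧ y i = 1} := by
    congr 1
    ext i
    simp only [mem_filter, mem_univ, true_and, eq_sub_iff_add_eq]
    constructor <;> rintro ⟨h, h1⟩ <;> exact ⟨h1 ▸ h, h1⟩
  have hzero : #{i | x i + y i = u ∧ ¬y i = 1} = #{i | x i = u ∧ ¬y i = 1} := by
    congr 1
    ext i
    rcases hy i with h | h <;> simp [h]
  rw [hone, hzero]
  ring

theorem sum_card_filter_and [Fintype R] (x : ι → R) (q : ι → Prop) [DecidablePred q] :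
    ∑ u, #{i | x i = u ∧ q i} = #{i | q i} := by
  rw [card_eq_sum_card_fiberwise (f := x) (t := univ) fun i _ => mem_coe.2 (mem_univ _)]
  simp only [filter_filter, and_comm]

end CardFilter

theorem ZMod.eq_zero_of_add_one_of_sum_eq_zero {N : ℕ} [NeZero N] {D : ZMod N → ℤ}
    (hD : ∀ u, D (u + 1) = D u) (hsum : ∑ u, D u = 0) (u : ZMod N) : D u = 0 := by
  have hnat : ∀ n : ℕ, D n = D 0 := by
    intro n
    induction n with
    | zero => simp
    | succ n ih => rw [Nat.cast_succ, hD, ih]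
  have hconst : ∀ u : ZMod N, D u = D 0 := fun u => by
    obtain ⟨n, rfl⟩ := ZMod.natCast_zmod_surjective u
    exact hnat n
  rw [sum_congr rfl fun u _ => hconst u, sum_const, card_univ, ZMod.card, nsmul_eq_mul] at hsum
  rw [hconst]
  exact (mul_eq_zero.mp hsum).resolve_left (by exact_mod_cast NeZero.ne N)

section ZeroOneVector

variable {ι : Type*} [Fintype ι] {N : ℕ} {x y x' y' : ι → ZMod N}

theorem card_filter_and_eq_one_eq [NeZero N] (hy : ∀ i, y i = 0 ∨ y i = 1)
    (hy' : ∀ i, y' i = 0 ∨ y' i = 1) (hx : ∀ u, #{i | x i = u} = #{i | x' i = u})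
    (hxy : ∀ u, #{i | x i + y i = u} = #{i | x' i + y' i = u})
    (hone : #{i | y i = 1} = #{i | y' i = 1}) (u : ZMod N) :
    #{i | x i = u ∧ y i = 1} = #{i | x' i = u ∧ y' i = 1} := by
  set D : ZMod N → ℤ := fun u => #{i | x i = u ∧ y i = 1} - #{i | x' i = u ∧ y' i = 1}
  have hD : ∀ u, D (u + 1) = D u := by
    intro u
    have h := card_filter_add_eq x hy (u + 1)
    have h' := card_filter_add_eq x' hy' (u + 1)
    rw [add_sub_cancel_right] at h h'
    have := hx (u + 1)
    have := hxy (u + 1)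
    simp only [D]
    omega
  have hsum : ∑ u, D u = 0 := by
    simp only [D, sum_sub_distrib, ← Nat.cast_sum, sum_card_filter_and, hone, sub_self]
  have := ZMod.eq_zero_of_add_one_of_sum_eq_zero hD hsum u
  simp only [D] at this
  omega

theorem exists_perm_of_card_filter_and_eq_one_eq (hy : ∀ i, y i = 0 ∨ y i = 1)
    (hy' : ∀ i, y' i = 0 ∨ y' i = 1) (hx : ∀ u, #{i | x i = u} = #{i | x' i = u})
    (hxy : ∀ u, #{i | x i = u ∧ y i = 1} = #{i | x' i = u ∧ y' i = 1}) :
    ∃ σ : Equiv.Perm ι, x ∘ σ = x' ∧ y ∘ σ = y' := by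
  -- a `0/1`-vector is determined by the coordinates where it is `1`
  obtain ⟨σ, hσ⟩ := exists_perm_comp_eq_iff_card_filter_eq
    (f := fun i => (x i, decide (y i = 1))) (g := fun i => (x' i, decide (y' i = 1))) |>.2 <| by
      rintro ⟨u, b⟩
      cases b
      · have := card_filter_eq_card_filter_and_add (fun i => x i = u) (fun i => y i = 1)
        have := card_filter_eq_card_filter_and_add (fun i => x' i = u) (fun i => y' i = 1)
        have := hx u
        have := hxy u
        simp only [Prod.mk.injEq, decide_eq_false_iff_not]
        omega
      · simpa only [Prod.mk.injEq, decide_eq_true_iff] using hxy u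
  refine ⟨σ, funext fun i => congrArg Prod.fst (congrFun hσ i), funext fun i => ?_⟩
  have h := congrArg Prod.snd (congrFun hσ i)
  simp only [Function.comp_apply, decide_eq_decide] at h
  rcases hy (σ i) with h₁ | h₁ <;> rcases hy' i with h₂ | h₂ <;> simp_all

end ZeroOneVector

namespace Orbits

variable {N k : ℕ}

theorem pact_inv (σ : Equiv.Perm (Fin k)) (x : Fin k → ZMod N) : pact σ⁻¹ x = x ∘ σ :=
  rfl

theorem sameOrbit_iff_exists_comp {x y : Fin k → ZMod N} :
    SameOrbit x y ↔ ∃ σ : Equiv.Perm (Fin k), x ∘ σ = y :=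
  ⟨fun ⟨σ, h⟩ => ⟨σ⁻¹, h⟩, fun ⟨σ, h⟩ => ⟨σ⁻¹, h⟩⟩

theorem sameOrbit_iff_card_filter_eq {x y : Fin k → ZMod N} :
    SameOrbit x y ↔ ∀ u, #{i | x i = u} = #{i | y i = u} :=
  sameOrbit_iff_exists_comp.trans exists_perm_comp_eq_iff_card_filter_eq

theorem card_filter_eq_of_mem_orbit {a x y : Fin k → ZMod N} (hx : x ∈ orbit a)
    (hy : y ∈ orbit a) (u : ZMod N) : #{i | x i = u} = #{i | y i = u} :=
  (sameOrbit_iff_card_filter_eq.1 hx u).symm.trans (sameOrbit_iff_card_filter_eq.1 hy u)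

theorem eq_zero_or_one_of_mem_orbit {b y : Fin k → ZMod N} (hb : ∀ i, b i = 0 ∨ b i = 1)
    (hy : y ∈ orbit b) (i : Fin k) : y i = 0 ∨ y i = 1 := by
  obtain ⟨σ, rfl⟩ := hy
  exact hb _

theorem oneZero_eq_zero_or_one (m : ℕ) (i : Fin k) :
    oneZero N k m i = 0 ∨ oneZero N k m i = 1 := by
  unfold oneZero
  split_ifs <;> simp

theorem exists_tact_eq_of_mem_T [NeZero N] {a b c : Fin k → ZMod N}
    (hb : ∀ i, b i = 0 ∨ b i = 1) {p q : Triple N k}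
    (hp : p ∈ T (orbit a) (orbit b) (orbit c)) (hq : q ∈ T (orbit a) (orbit b) (orbit c)) :
    ∃ σ : Equiv.Perm (Fin k), tact σ p = q := by
  obtain ⟨x, y, z⟩ := p
  obtain ⟨x', y', z'⟩ := q
  obtain ⟨hx, hy, hz, rfl : x + y = z⟩ := hp
  obtain ⟨hx', hy', hz', rfl : x' + y' = z'⟩ := hq
  have hy01 := eq_zero_or_one_of_mem_orbit hb hy
  have hy01' := eq_zero_or_one_of_mem_orbit hb hy'
  have hxx' := card_filter_eq_of_mem_orbit hx hx'
  obtain ⟨σ, hσx, hσy⟩ : ∃ σ : Equiv.Perm (Fin k), x ∘ σ = x' ∧ y ∘ σ = y' :=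
    exists_perm_of_card_filter_and_eq_one_eq hy01 hy01' hxx' <|
      card_filter_and_eq_one_eq hy01 hy01' hxx' (card_filter_eq_of_mem_orbit hz hz')
        (card_filter_eq_of_mem_orbit hy hy' 1)
  refine ⟨σ⁻¹, ?_⟩
  simp only [tact, pact_inv, ← hσx, ← hσy]
  rfl

theorem numOrbitsOn_eq_one {S : Set (Triple N k)} (hne : S.Nonempty)
    (htrans : ∀ p ∈ S, ∀ q ∈ S, ∃ σ : Equiv.Perm (Fin k), tact σ p = q) :
    numOrbitsOn S = 1 := by
  obtain ⟨p₀, hp₀⟩ := hne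
  refine Nat.card_eq_one_iff_unique.2 ⟨⟨fun p q => ?_⟩, ⟨Quot.mk _ ⟨p₀, hp₀⟩⟩⟩
  induction p using Quot.ind
  induction q using Quot.ind
  exact Quot.sound (htrans _ (Subtype.prop _) _ (Subtype.prop _))

end Orbits

theorem stmt5_general (N k m : ℕ) (hN : 2 ≤ N)
    (a c : Fin k → ZMod N)
    (hne : (T (orbit a) (orbit (oneZero N k m)) (orbit c)).Nonempty) :
    M a (oneZero N k m) c = 1 := by
  have : NeZero N := ⟨by omega⟩
  exact numOrbitsOn_eq_one hne fun _ hp _ hq =>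
    exists_tact_eq_of_mem_T (oneZero_eq_zero_or_one m) hp hq

theorem stmt5 (N k m : ℕ) (hN : 2 ≤ N) (hk : 0 < k) (hm : m ≤ k)
    (a c : Fin k → ZMod N)
    (hne : (T (orbit a) (orbit (oneZero N k m)) (orbit c)).Nonempty) :
    M a (oneZero N k m) c = 1 :=
  stmt5_general N k m hN a c hne
end

section
/- Let a, b, c ∈ (ZMod N)^k with the standard form of b equal to (1^m, 0^{k-m}) for some m ≤ k. Then the number of S_k-orbits of T([a],[b],[c]) is at most the number of S_{k+1}-orbits of T([a,0],[b,0],[c,0]), where (x,0) denotes appending a zero coordinate. (Level-increasing inequality for orbit structure constants.) -/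
open Orbits

open Equiv Function

namespace Orbits

variable {N k : ℕ}

lemma pact_apply (σ : Perm (Fin k)) (x : Fin k → ZMod N) (i : Fin k) :
    pact σ x i = x (σ⁻¹ i) :=
  rfl

lemma pact_mul (σ τ : Perm (Fin k)) (x : Fin k → ZMod N) :
    pact σ (pact τ x) = pact (σ * τ) x := by
  funext i
  simp [pact_apply, mul_inv_rev]

lemma pact_mul_swap (σ : Perm (Fin k)) (x : Fin k → ZMod N) {i j : Fin k} (h : x i = x j) :
    pact (σ * swap i j) x = pact σ x := by
  have hx : x ∘ swap i j = x := by
    rw [comp_swap_eq_update, h, update_eq_self, ← h, update_eq_self]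
  funext l
  simpa [pact_apply, mul_inv_rev] using congrFun hx (σ⁻¹ l)

lemma tact_one (p : Triple N k) : tact 1 p = p :=
  rfl

lemma tact_mul (σ τ : Perm (Fin k)) (p : Triple N k) :
    tact σ (tact τ p) = tact (σ * τ) p := by
  simp only [tact, pact_mul]

lemma orbit_finite (x : Fin k → ZMod N) : (orbit x).Finite :=
  Set.finite_range fun σ => pact σ x

lemma T_finite {A B C : Set (Fin k → ZMod N)} (hA : A.Finite) (hB : B.Finite) (hC : C.Finite) :
    (T A B C).Finite :=
  (hA.prod (hB.prod hC)).subset fun _ hp => ⟨hp.1, hp.2.1, hp.2.2.1⟩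

lemma tact_equivalence (S : Set (Triple N k)) :
    Equivalence (fun p q : S => ∃ σ : Perm (Fin k), tact σ (p : Triple N k) = q) where
  refl _ := ⟨1, tact_one _⟩
  symm := by
    rintro p q ⟨σ, hσ⟩
    exact ⟨σ⁻¹, by rw [← hσ, tact_mul, inv_mul_cancel, tact_one]⟩
  trans := by
    rintro p q r ⟨σ, hσ⟩ ⟨τ, hτ⟩
    exact ⟨τ * σ, by rw [← hτ, ← hσ, tact_mul]⟩

lemma numOrbitsOn_le_of_mapsTo {k' : ℕ} {S : Set (Triple N k)} {S' : Set (Triple N k')}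
    (hS' : S'.Finite) (f : Triple N k → Triple N k') (hf : Set.MapsTo f S S')
    (hcompat : ∀ (σ : Perm (Fin k)) p, ∃ σ' : Perm (Fin k'), tact σ' (f p) = f (tact σ p))
    (hreflect : ∀ (σ' : Perm (Fin k')) p q, tact σ' (f p) = f q → ∃ σ, tact σ p = q) :
    numOrbitsOn S ≤ numOrbitsOn S' := by
  have : Finite S' := hS'
  let F : S → S' := fun p => ⟨f p, hf p.2⟩
  let g : Quot (fun p q : S => ∃ σ, tact σ (p : Triple N k) = q) →
      Quot (fun p q : S' => ∃ σ', tact σ' (p : Triple N k') = q) :=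
    Quot.lift (fun p => Quot.mk _ (F p)) (by
      rintro p q ⟨σ, hσ⟩
      obtain ⟨σ', hσ'⟩ := hcompat σ p
      exact Quot.sound ⟨σ', by simp only [F, hσ', hσ]⟩)
  refine Nat.card_le_card_of_injective g ?_
  rintro ⟨p⟩ ⟨q⟩ hpq
  obtain ⟨σ', hσ'⟩ := (tact_equivalence S').eqvGen_iff.mp (Quot.eqvGen_exact hpq)
  exact Quot.sound (hreflect σ' p q hσ')

def extPerm (σ : Perm (Fin k)) : Perm (Fin (k + 1)) :=
  finSuccEquivLast.symm.permCongr σ.optionCongr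

lemma extPerm_inv_castSucc (σ : Perm (Fin k)) (i : Fin k) :
    (extPerm σ)⁻¹ (Fin.castSucc i) = Fin.castSucc (σ⁻¹ i) := by
  rw [Perm.inv_eq_iff_eq]
  simp [extPerm, permCongr_apply]

lemma extPerm_inv_last (σ : Perm (Fin k)) : (extPerm σ)⁻¹ (Fin.last k) = Fin.last k := by
  rw [Perm.inv_eq_iff_eq]
  simp [extPerm, permCongr_apply]

lemma pact_extPerm_snoc (σ : Perm (Fin k)) (x : Fin k → ZMod N) (t : ZMod N) :
    pact (extPerm σ) (Fin.snoc x t) = Fin.snoc (pact σ x) t := by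
  funext i
  induction i using Fin.lastCases with
  | last => simp [pact_apply, extPerm_inv_last]
  | cast j => simp [pact_apply, extPerm_inv_castSucc]

lemma exists_extPerm_eq {σ : Perm (Fin (k + 1))} (h : σ (Fin.last k) = Fin.last k) :
    ∃ τ : Perm (Fin k), extPerm τ = σ := by
  set e : Perm (Option (Fin k)) := finSuccEquivLast.permCongr σ
  have he : e none = none := by simp [e, permCongr_apply, h]
  refine ⟨removeNone e, ?_⟩
  have hopt : (removeNone e).optionCongr = e := by
    ext1 x
    simp [he]
  ext i
  simp [extPerm, hopt, e, permCongr_apply]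

lemma pact_mul_swap_inv_last_snoc {σ : Perm (Fin (k + 1))} {x x' : Fin k → ZMod N}
    {t : ZMod N} (h : pact σ (Fin.snoc x t) = Fin.snoc x' t) :
    pact (σ * swap (σ⁻¹ (Fin.last k)) (Fin.last k)) (Fin.snoc x t) = Fin.snoc x' t := by
  rw [pact_mul_swap, h]
  simpa [pact_apply] using congrFun h (Fin.last k)

lemma snoc_add_snoc (x y : Fin k → ZMod N) (s t : ZMod N) :
    (Fin.snoc x s + Fin.snoc y t : Fin (k + 1) → ZMod N) = Fin.snoc (x + y) (s + t) := by
  funext i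
  induction i using Fin.lastCases <;> simp

def snocTriple (p : Triple N k) : Triple N (k + 1) :=
  (Fin.snoc p.1 0, Fin.snoc p.2.1 0, Fin.snoc p.2.2 0)

lemma snocTriple_injective : Injective (snocTriple : Triple N k → Triple N (k + 1)) := by
  rintro ⟨x, y, z⟩ ⟨x', y', z'⟩ h
  simp only [snocTriple, Prod.mk.injEq, Fin.snoc_inj, and_true] at h
  rw [h.1, h.2.1, h.2.2]

lemma tact_extPerm_snocTriple (σ : Perm (Fin k)) (p : Triple N k) :
    tact (extPerm σ) (snocTriple p) = snocTriple (tact σ p) := by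
  simp only [tact, snocTriple, pact_extPerm_snoc]

lemma snocTriple_mem_T {a b c : Fin k → ZMod N} {p : Triple N k}
    (hp : p ∈ T (orbit a) (orbit b) (orbit c)) :
    snocTriple p ∈ T (orbit (Fin.snoc a (0 : ZMod N))) (orbit (Fin.snoc b (0 : ZMod N)))
      (orbit (Fin.snoc c (0 : ZMod N))) := by
  obtain ⟨⟨σa, ha⟩, ⟨σb, hb⟩, ⟨σc, hc⟩, hsum⟩ := hp
  rw [snocTriple]
  refine ⟨⟨extPerm σa, ?_⟩, ⟨extPerm σb, ?_⟩, ⟨extPerm σc, ?_⟩, ?_⟩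
  · rw [pact_extPerm_snoc, ha]
  · rw [pact_extPerm_snoc, hb]
  · rw [pact_extPerm_snoc, hc]
  · rw [← hsum, snoc_add_snoc, add_zero]

lemma exists_tact_of_tact_snocTriple {σ : Perm (Fin (k + 1))} {p q : Triple N k}
    (h : tact σ (snocTriple p) = snocTriple q) : ∃ τ : Perm (Fin k), tact τ p = q := by
  simp only [tact, snocTriple, Prod.mk.injEq] at h
  obtain ⟨hx, hy, hz⟩ := h
  have hfix : (σ * swap (σ⁻¹ (Fin.last k)) (Fin.last k)) (Fin.last k) = Fin.last k := by
    simp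
  obtain ⟨τ, hτ⟩ := exists_extPerm_eq hfix
  refine ⟨τ, snocTriple_injective ?_⟩
  rw [← tact_extPerm_snocTriple, hτ]
  simp only [tact, snocTriple, pact_mul_swap_inv_last_snoc hx,
    pact_mul_swap_inv_last_snoc hy, pact_mul_swap_inv_last_snoc hz]

end Orbits

open Orbits

theorem stmt7_general (N k : ℕ) (a b c : Fin k → ZMod N) :
    M a b c ≤
      M (Fin.snoc a (0 : ZMod N)) (Fin.snoc b (0 : ZMod N)) (Fin.snoc c (0 : ZMod N)) :=
  numOrbitsOn_le_of_mapsTo (T_finite (orbit_finite _) (orbit_finite _) (orbit_finite _))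
    snocTriple (fun _ hp => snocTriple_mem_T hp)
    (fun σ p => ⟨extPerm σ, tact_extPerm_snocTriple σ p⟩)
    (fun _ _ _ h => exists_tact_of_tact_snocTriple h)

theorem stmt7 (N k m : ℕ) (hN : 2 ≤ N) (hk : 0 < k) (hm : m ≤ k)
    (a b c : Fin k → ZMod N) (hb : b ∈ orbit (oneZero N k m)) :
    M a b c ≤
      M (Fin.snoc a (0 : ZMod N)) (Fin.snoc b (0 : ZMod N)) (Fin.snoc c (0 : ZMod N)) :=
  stmt7_general N k a b c
end

section
/- For any orbits [a],[b] of the S_k-action on (ZMod N)^k, the total count Σ_{[c]} M_{[a],[b]}^{[c]} over all orbits [c] equals the number of orbits of the stabilizer of â acting on [b], where â is any fixed element of [a]. -/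
open Orbits

namespace Stmt14

variable {N k : ℕ}

lemma pact_pact (σ τ : Equiv.Perm (Fin k)) (x : Fin k → ZMod N) :
    pact σ (pact τ x) = pact (σ * τ) x := by
  funext i; simp [pact, mul_inv_rev]

lemma pact_one (x : Fin k → ZMod N) : pact 1 x = x := rfl

lemma pact_add (σ : Equiv.Perm (Fin k)) (x y : Fin k → ZMod N) :
    pact σ (x + y) = pact σ x + pact σ y := rfl

lemma so_refl (x : Fin k → ZMod N) : SameOrbit x x := ⟨1, rfl⟩

lemma so_symm {x y : Fin k → ZMod N} (h : SameOrbit x y) : SameOrbit y x := by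
  obtain ⟨σ, h⟩ := h
  exact ⟨σ⁻¹, by rw [← h, pact_pact, inv_mul_cancel, pact_one]⟩

lemma so_trans {x y z : Fin k → ZMod N} (h1 : SameOrbit x y) (h2 : SameOrbit y z) :
    SameOrbit x z := by
  obtain ⟨σ, h1⟩ := h1; obtain ⟨τ, h2⟩ := h2
  exact ⟨τ * σ, by rw [← pact_pact, h1, h2]⟩

lemma mem_orbit_pact {x y : Fin k → ZMod N} (σ : Equiv.Perm (Fin k)) (h : y ∈ orbit x) :
    pact σ y ∈ orbit x := so_trans h ⟨σ, rfl⟩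

/-- relation on pairs -/
def relP (a b : Fin k → ZMod N) (p q : ↥((orbit a) ×ˢ (orbit b))) : Prop :=
  ∃ σ : Equiv.Perm (Fin k), pact σ p.1.1 = q.1.1 ∧ pact σ p.1.2 = q.1.2

def relT (a b r : Fin k → ZMod N) (p q : ↥(T (orbit a) (orbit b) (orbit r))) : Prop :=
  ∃ σ : Equiv.Perm (Fin k), tact σ (p : Triple N k) = (q : Triple N k)

lemma M_eq (a b r : Fin k → ZMod N) : M a b r = Nat.card (Quot (relT a b r)) := rfl

lemma pact_inv {σ : Equiv.Perm (Fin k)} {x y : Fin k → ZMod N} (h : pact σ x = y) :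
    pact σ⁻¹ y = x := by
  rw [← h, pact_pact, inv_mul_cancel, pact_one]

def relB (b ahat : Fin k → ZMod N) (y y' : ↥(orbit b)) : Prop :=
  ∃ σ : Equiv.Perm (Fin k), pact σ ahat = ahat ∧ pact σ (y : Fin k → ZMod N) = y'

variable (a b ahat : Fin k → ZMod N)

noncomputable def tau (ha : ahat ∈ orbit a) (p : ↥((orbit a) ×ˢ (orbit b))) :
    Equiv.Perm (Fin k) :=
  (so_trans (so_symm p.2.1) ha).choose

lemma tau_spec (ha : ahat ∈ orbit a) (p : ↥((orbit a) ×ˢ (orbit b))) :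
    pact (tau a b ahat ha p) p.1.1 = ahat :=
  (so_trans (so_symm p.2.1) ha).choose_spec

noncomputable def eB (ha : ahat ∈ orbit a) : Quot (relP a b) ≃ Quot (relB b ahat) where
  toFun := Quot.lift
    (fun p => Quot.mk _ (⟨pact (tau a b ahat ha p) p.1.2, mem_orbit_pact _ p.2.2⟩ : ↥(orbit b)))
    (by
      rintro p q ⟨σ, h1, h2⟩
      apply Quot.sound
      refine ⟨tau a b ahat ha q * σ * (tau a b ahat ha p)⁻¹, ?_, ?_⟩
      · show pact _ ahat = ahat
        rw [← pact_pact, ← pact_pact, pact_inv (tau_spec a b ahat ha p), h1,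
          tau_spec a b ahat ha q]
      · show pact _ (pact (tau a b ahat ha p) p.1.2) = pact (tau a b ahat ha q) q.1.2
        rw [← pact_pact, ← pact_pact, pact_pact _ (tau a b ahat ha p), inv_mul_cancel,
          pact_one, h2])
  invFun := Quot.lift
    (fun y => Quot.mk _ (⟨(ahat, (y : Fin k → ZMod N)), ⟨ha, y.2⟩⟩ : ↥((orbit a) ×ˢ (orbit b))))
    (by
      rintro y y' ⟨σ, h1, h2⟩
      exact Quot.sound ⟨σ, h1, h2⟩)
  left_inv := by
    apply Quot.ind
    intro p
    apply Quot.sound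
    exact ⟨(tau a b ahat ha p)⁻¹, pact_inv (tau_spec a b ahat ha p),
      by rw [pact_pact, inv_mul_cancel, pact_one]⟩
  right_inv := by
    apply Quot.ind
    intro y
    apply Quot.sound
    have hs : pact (tau a b ahat ha ⟨(ahat, (y : Fin k → ZMod N)), ⟨ha, y.2⟩⟩) ahat = ahat :=
      tau_spec a b ahat ha ⟨(ahat, (y : Fin k → ZMod N)), ⟨ha, y.2⟩⟩
    exact ⟨(tau a b ahat ha ⟨(ahat, (y : Fin k → ZMod N)), ⟨ha, y.2⟩⟩)⁻¹, pact_inv hs,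
      by rw [pact_pact, inv_mul_cancel, pact_one]⟩

variable (R : Finset (Fin k → ZMod N))
variable (hR : ∀ c : Fin k → ZMod N, ∃! r, r ∈ R ∧ SameOrbit c r)

noncomputable def rep (c : Fin k → ZMod N) : Fin k → ZMod N := (hR c).choose

lemma rep_mem (c : Fin k → ZMod N) : rep R hR c ∈ R := (hR c).choose_spec.1.1

lemma rep_so (c : Fin k → ZMod N) : SameOrbit c (rep R hR c) := (hR c).choose_spec.1.2

lemma rep_unique {c r : Fin k → ZMod N} (h1 : r ∈ R) (h2 : SameOrbit c r) :
    r = rep R hR c := (hR c).choose_spec.2 r ⟨h1, h2⟩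

lemma rep_congr {c c' : Fin k → ZMod N} (h : SameOrbit c c') :
    rep R hR c = rep R hR c' :=
  rep_unique R hR (rep_mem R hR c) (so_trans (so_symm h) (rep_so R hR c))

lemma sigma_helper {r r' : ↥R} (h : (r : Fin k → ZMod N) = (r' : Fin k → ZMod N))
    (t : ↥(T (orbit a) (orbit b) (orbit (r : Fin k → ZMod N))))
    (t' : ↥(T (orbit a) (orbit b) (orbit (r' : Fin k → ZMod N))))
    (hrel : ∃ σ : Equiv.Perm (Fin k), tact σ (t : Triple N k) = (t' : Triple N k)) :
    (⟨r, Quot.mk _ t⟩ : Σ r : ↥R, Quot (relT a b (r : Fin k → ZMod N))) = ⟨r', Quot.mk _ t'⟩ := by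
  obtain ⟨r, hr⟩ := r
  obtain ⟨r', hr'⟩ := r'
  simp only at h
  subst h
  exact congrArg (fun q => (⟨⟨r, hr⟩, q⟩ : Σ r : ↥R, Quot (relT a b (r : Fin k → ZMod N))))
    (Quot.sound hrel)

lemma memT {A B C : Set (Fin k → ZMod N)} {p : Triple N k} (h : p ∈ T A B C) :
    p.1 ∈ A ∧ p.2.1 ∈ B ∧ p.2.2 ∈ C ∧ p.1 + p.2.1 = p.2.2 := h

def fwdFun (r : Fin k → ZMod N) (t : ↥(T (orbit a) (orbit b) (orbit r))) :
    ↥((orbit a) ×ˢ (orbit b)) :=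
  ⟨((t : Triple N k).1, (t : Triple N k).2.1), ⟨(memT t.2).1, (memT t.2).2.1⟩⟩

def fwd (r : Fin k → ZMod N) : Quot (relT a b r) → Quot (relP a b) :=
  Quot.lift (fun t => Quot.mk (relP a b) (fwdFun a b r t))
    (by
      rintro t t' ⟨σ, hσ⟩
      apply Quot.sound
      exact ⟨σ, congrArg Prod.fst hσ, congrArg (fun z : Triple N k => z.2.1) hσ⟩)

noncomputable def bwdFun (p : ↥((orbit a) ×ˢ (orbit b))) :
    Σ r : ↥R, Quot (relT a b (r : Fin k → ZMod N)) :=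
  ⟨⟨rep R hR (p.1.1 + p.1.2), rep_mem R hR _⟩,
    Quot.mk _ ⟨(p.1.1, p.1.2, p.1.1 + p.1.2),
      ⟨p.2.1, p.2.2, so_symm (rep_so R hR _), rfl⟩⟩⟩

noncomputable def eA : (Σ r : ↥R, Quot (relT a b (r : Fin k → ZMod N))) ≃ Quot (relP a b) where
  toFun s := fwd a b (s.1 : Fin k → ZMod N) s.2
  invFun := Quot.lift (bwdFun a b R hR)
    (by
      rintro p q ⟨σ, h1, h2⟩
      have hsum : pact σ (p.1.1 + p.1.2) = q.1.1 + q.1.2 := by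
        rw [pact_add, h1, h2]
      refine sigma_helper a b R (r := ⟨rep R hR (p.1.1 + p.1.2), rep_mem R hR _⟩)
        (r' := ⟨rep R hR (q.1.1 + q.1.2), rep_mem R hR _⟩)
        (rep_congr R hR ⟨σ, hsum⟩) _ _ ?_
      exact ⟨σ, by show (pact σ _, pact σ _, pact σ _) = _; rw [h1, h2, hsum]⟩)
  left_inv := by
    rintro ⟨r, q⟩
    induction q using Quot.ind with
    | _ t =>
      have ht := memT t.2
      have hso : SameOrbit ((t : Triple N k).1 + (t : Triple N k).2.1) (r : Fin k → ZMod N) := by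
        rw [ht.2.2.2]
        exact so_symm ht.2.2.1
      refine sigma_helper a b R (r := ⟨rep R hR _, rep_mem R hR _⟩) (r' := r)
        ((rep_unique R hR r.2 hso).symm) _ _ ?_
      refine ⟨1, ?_⟩
      show tact 1 (((t : Triple N k).1, (t : Triple N k).2.1,
          (t : Triple N k).1 + (t : Triple N k).2.1) : Triple N k) = (t : Triple N k)
      have he : (((t : Triple N k).1, (t : Triple N k).2.1,
          (t : Triple N k).1 + (t : Triple N k).2.1) : Triple N k) = (t : Triple N k) := by
        rw [ht.2.2.2]
      rw [he]
      rfl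
  right_inv := by
    apply Quot.ind
    intro p
    rfl

end Stmt14

theorem stmt14 (N k : ℕ) [NeZero N] (hk : 0 < k) (a b : Fin k → ZMod N)
    (R : Finset (Fin k → ZMod N))
    (hR : ∀ c : Fin k → ZMod N, ∃! r, r ∈ R ∧ SameOrbit c r)
    (ahat : Fin k → ZMod N) (ha : ahat ∈ orbit a) :
    (∑ r ∈ R, M a b r) =
      Nat.card (Quot (fun y y' : orbit b =>
        ∃ σ : Equiv.Perm (Fin k), pact σ ahat = ahat ∧
          pact σ (y : Fin k → ZMod N) = y')) := by
  classical
  calc ∑ r ∈ R, M a b r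
      = ∑ r : ↥R, Nat.card (Quot (Stmt14.relT a b (r : Fin k → ZMod N))) :=
        (Finset.sum_coe_sort R (fun r => M a b r)).symm
    _ = Nat.card (Σ r : ↥R, Quot (Stmt14.relT a b (r : Fin k → ZMod N))) := by
        letI : ∀ r : ↥R, Fintype (Quot (Stmt14.relT a b (r : Fin k → ZMod N))) :=
          fun r => Fintype.ofFinite _
        rw [Nat.card_eq_fintype_card, Fintype.card_sigma]
        exact Finset.sum_congr rfl fun r _ => Nat.card_eq_fintype_card
    _ = Nat.card (Quot (Stmt14.relP a b)) := Nat.card_congr (Stmt14.eA a b R hR)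
    _ = Nat.card (Quot (Stmt14.relB b ahat)) := Nat.card_congr (Stmt14.eB a b ahat ha)
    _ = _ := rfl
end
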